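/- If G is a complete multipartite graph, then χ_NL(μ(G)) = χ_NL(G) + 1, where μ(G) is the Mycielski graph of G. -/

import Mathlib

open SimpleGraph

/-- A coloring `c : V → Fin k` is a *neighbor-locating coloring* of `G` if it is proper and
any two distinct vertices with the same color have different sets of colors on their
open neighborhoods. -/
def IsNLColoring {V : Type*} (G : SimpleGraph V) {k : ℕ} (c : V → Fin k) : Prop :=
  (∀ u v : V, G.Adj u v → c u ≠ c v) ∧
  ∀ u v : V, u ≠ v → c u = c v → c '' (G.neighborSet u) ≠ c '' (G.neighborSet v)

/-- The neighbor-locating chromatic number: the least `k` admitting an NL-coloring. -/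
noncomputable def nlChromaticNumber {V : Type*} (G : SimpleGraph V) : ℕ :=
  sInf {k : ℕ | ∃ c : V → Fin k, IsNLColoring G c}

/-- A graph is complete multipartite iff it has at least one edge and any two distinct
non-adjacent vertices have identical open neighborhoods. -/
def IsCompleteMultipartiteGraph {V : Type*} (G : SimpleGraph V) : Prop :=
  (∃ u v : V, G.Adj u v) ∧
  ∀ u v : V, u ≠ v → ¬ G.Adj u v → G.neighborSet u = G.neighborSet v

set_option linter.unreachableTactic false in
set_option linter.unusedTactic false in
/-- The Mycielski graph of `G`: vertices `v_a = Sum.inl a`, shadow vertices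
`u_a = Sum.inr (Sum.inl a)` and the apex `w = Sum.inr (Sum.inr ())`. -/
def mycielskian {α : Type*} (G : SimpleGraph α) : SimpleGraph (α ⊕ α ⊕ Unit) where
  Adj x y :=
    match x, y with
    | Sum.inl a, Sum.inl b => G.Adj a b
    | Sum.inl a, Sum.inr (Sum.inl b) => G.Adj a b
    | Sum.inr (Sum.inl a), Sum.inl b => G.Adj a b
    | Sum.inr (Sum.inl _), Sum.inr (Sum.inr _) => True
    | Sum.inr (Sum.inr _), Sum.inr (Sum.inl _) => True
    | _, _ => False
  symm := by
    constructor
    rintro (a | a | a) (b | b | b) h <;>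
      first | exact G.adj_symm h | trivial | exact h.elim
  loopless := by
    constructor
    rintro (a | a | a) h <;> first | exact G.irrefl h | exact h.elim

/-!
An NL-colouring of a complete multipartite graph is injective, since two distinct vertices are
either adjacent or have the same neighbourhood; so `χ_NL(G) = |V|`. Giving every shadow vertex
the colour of its original and the apex a new colour turns any NL-colouring of `G` into one of
`μ(G)`. Conversely, the originals of `μ(G)` still get pairwise distinct colours. If they used all
colours, each shadow `u_a` would have the colour of some original `v_b` with `N(a) = N(b)`; the
colours around `v_b` are then those of `N(a)`, and the colours around `u_a` are these plus the
apex colour, so the apex colour never occurs on a neighbourhood in `G`. But it is the colour of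
some original, and every vertex of `G` has a neighbour.
-/

namespace IsNLColoring

variable {V : Type*} {G : SimpleGraph V} {k : ℕ} {c : V → Fin k}

theorem of_injective (hc : Function.Injective c) : IsNLColoring G c :=
  ⟨fun _ _ huv hcol => G.ne_of_adj huv (hc hcol), fun _ _ huv hcol => absurd (hc hcol) huv⟩

theorem ne_of_neighborSet_eq (hc : IsNLColoring G c) {u v : V} (huv : u ≠ v)
    (hN : G.neighborSet u = G.neighborSet v) : c u ≠ c v :=
  fun hcol => hc.2 u v huv hcol (by rw [hN])

theorem nlChromaticNumber_le (hc : IsNLColoring G c) : nlChromaticNumber G ≤ k :=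
  Nat.sInf_le ⟨c, hc⟩

end IsNLColoring

theorem exists_isNLColoring_nlChromaticNumber {V : Type*} [Finite V] (G : SimpleGraph V) :
    ∃ c : V → Fin (nlChromaticNumber G), IsNLColoring G c := by
  obtain ⟨n, ⟨e⟩⟩ := Finite.exists_equiv_fin V
  exact Nat.sInf_mem (s := {k | ∃ c : V → Fin k, IsNLColoring G c})
    ⟨n, e, .of_injective e.injective⟩

namespace IsCompleteMultipartiteGraph

variable {V : Type*} {G : SimpleGraph V}

theorem neighborSet_eq_of_not_adj (hG : IsCompleteMultipartiteGraph G) {u v : V}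
    (huv : ¬ G.Adj u v) : G.neighborSet u = G.neighborSet v := by
  obtain rfl | hne := eq_or_ne u v
  · rfl
  · exact hG.2 u v hne huv

theorem exists_adj (hG : IsCompleteMultipartiteGraph G) (u : V) : ∃ v, G.Adj u v := by
  obtain ⟨a, b, hab⟩ := hG.1
  by_cases hua : G.Adj u a
  · exact ⟨a, hua⟩
  · refine ⟨b, ?_⟩
    rw [← mem_neighborSet, hG.neighborSet_eq_of_not_adj hua]
    exact hab

theorem injective_of_isNLColoring (hG : IsCompleteMultipartiteGraph G) {k : ℕ}
    {c : V → Fin k} (hc : IsNLColoring G c) : Function.Injective c := by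
  intro u v hcol
  by_contra huv
  by_cases hadj : G.Adj u v
  · exact hc.1 u v hadj hcol
  · exact hc.ne_of_neighborSet_eq huv (hG.2 u v huv hadj) hcol

theorem nlChromaticNumber_eq_card [Fintype V] (hG : IsCompleteMultipartiteGraph G) :
    nlChromaticNumber G = Fintype.card V := by
  refine le_antisymm
    (IsNLColoring.of_injective (Fintype.equivFin V).injective).nlChromaticNumber_le ?_
  obtain ⟨c, hc⟩ := exists_isNLColoring_nlChromaticNumber G
  simpa using Fintype.card_le_of_injective c (hG.injective_of_isNLColoring hc)

end IsCompleteMultipartiteGraph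

section Mycielskian

variable {α : Type*} (G : SimpleGraph α)

theorem mycielskian_neighborSet_inl (a : α) :
    (mycielskian G).neighborSet (Sum.inl a) =
      Sum.inl '' G.neighborSet a ∪ (Sum.inr ∘ Sum.inl) '' G.neighborSet a := by
  ext (b | b | _) <;> simp [mycielskian]

theorem mycielskian_neighborSet_inr_inl (a : α) :
    (mycielskian G).neighborSet (Sum.inr (Sum.inl a)) =
      insert (Sum.inr (Sum.inr ())) (Sum.inl '' G.neighborSet a) := by
  ext (b | b | _) <;> simp [mycielskian]

end Mycielskian

section MycielskianColoring

variable {α : Type*} {G : SimpleGraph α} {k : ℕ}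

def mycielskianColoring (c : α → Fin k) : α ⊕ α ⊕ Unit → Fin (k + 1) :=
  Sum.elim (Fin.castSucc ∘ c) (Sum.elim (Fin.castSucc ∘ c) fun _ => Fin.last k)

theorem mycielskianColoring_image_neighborSet_inl (c : α → Fin k) (a : α) :
    mycielskianColoring c '' (mycielskian G).neighborSet (Sum.inl a) =
      Fin.castSucc '' (c '' G.neighborSet a) := by
  rw [mycielskian_neighborSet_inl, Set.image_union, Set.image_image, Set.image_image,
    Set.image_image]
  exact Set.union_self _

theorem mycielskianColoring_image_neighborSet_inr_inl (c : α → Fin k) (a : α) :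
    mycielskianColoring c '' (mycielskian G).neighborSet (Sum.inr (Sum.inl a)) =
      insert (Fin.last k) (Fin.castSucc '' (c '' G.neighborSet a)) := by
  rw [mycielskian_neighborSet_inr_inl, Set.image_insert_eq, Set.image_image, Set.image_image]
  rfl

theorem Fin.last_notMem_image_castSucc (s : Set (Fin k)) : Fin.last k ∉ Fin.castSucc '' s :=
  fun ⟨i, _, hi⟩ => Fin.castSucc_ne_last i hi

theorem Fin.insert_last_image_castSucc_injective :
    Function.Injective fun s : Set (Fin k) => insert (Fin.last k) (Fin.castSucc '' s) := by
  intro s t hst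
  apply Set.image_injective.mpr (Fin.castSucc_injective k)
  simpa only [Set.insert_sdiff_self_of_notMem (Fin.last_notMem_image_castSucc _)] using
    congrArg (· \ {Fin.last k}) hst

theorem IsNLColoring.mycielskianColoring {c : α → Fin k} (hc : IsNLColoring G c) :
    IsNLColoring (mycielskian G) (mycielskianColoring c) := by
  constructor
  · rintro (a | a | _) (b | b | _) hadj hcol
    all_goals first
      | exact hadj.elim
      | exact hc.1 a b hadj (Fin.castSucc_injective k hcol)
      | exact Fin.castSucc_ne_last _ hcol
      | exact Fin.castSucc_ne_last _ hcol.symm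
  · rintro (a | a | ⟨⟨⟩⟩) (b | b | ⟨⟨⟩⟩) hne hcol hN
    all_goals simp only [mycielskianColoring_image_neighborSet_inl,
      mycielskianColoring_image_neighborSet_inr_inl] at hN
    · exact hc.2 a b (by rintro rfl; exact hne rfl) (Fin.castSucc_injective k hcol)
        (Set.image_injective.mpr (Fin.castSucc_injective k) hN)
    · exact Fin.last_notMem_image_castSucc _ (hN ▸ Set.mem_insert _ _)
    · exact Fin.castSucc_ne_last _ hcol
    · exact Fin.last_notMem_image_castSucc _ (hN ▸ Set.mem_insert _ _)
    · exact hc.2 a b (by rintro rfl; exact hne rfl) (Fin.castSucc_injective k hcol)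
        (Fin.insert_last_image_castSucc_injective hN)
    · exact Fin.castSucc_ne_last _ hcol
    · exact Fin.castSucc_ne_last _ hcol.symm
    · exact Fin.castSucc_ne_last _ hcol.symm
    · exact hne rfl

theorem nlChromaticNumber_mycielskian_le [Finite α] (G : SimpleGraph α) :
    nlChromaticNumber (mycielskian G) ≤ nlChromaticNumber G + 1 := by
  obtain ⟨c, hc⟩ := exists_isNLColoring_nlChromaticNumber G
  exact hc.mycielskianColoring.nlChromaticNumber_le

end MycielskianColoring

namespace IsCompleteMultipartiteGraph

variable {α : Type*} {G : SimpleGraph α} {k : ℕ} {c : α ⊕ α ⊕ Unit → Fin k}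

theorem injective_comp_inl (hG : IsCompleteMultipartiteGraph G)
    (hc : IsNLColoring (mycielskian G) c) : Function.Injective (c ∘ Sum.inl) := by
  intro a b hcol
  by_contra hab
  by_cases hadj : G.Adj a b
  · exact hc.1 (Sum.inl a) (Sum.inl b) hadj hcol
  · refine hc.ne_of_neighborSet_eq (Sum.inl_injective.ne hab) ?_ hcol
    rw [mycielskian_neighborSet_inl, mycielskian_neighborSet_inl,
      hG.neighborSet_eq_of_not_adj hadj]

theorem exists_neighborSet_eq_of_surjective (hG : IsCompleteMultipartiteGraph G)
    (hc : IsNLColoring (mycielskian G) c) (hsurj : Function.Surjective (c ∘ Sum.inl)) (a : α) :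
    ∃ b, c (Sum.inr (Sum.inl a)) = c (Sum.inl b) ∧ G.neighborSet a = G.neighborSet b := by
  obtain ⟨b, hb⟩ := hsurj (c (Sum.inr (Sum.inl a)))
  refine ⟨b, hb.symm, hG.neighborSet_eq_of_not_adj fun hab => ?_⟩
  exact hc.1 (Sum.inr (Sum.inl a)) (Sum.inl b) hab hb.symm

theorem image_neighborSet_inl_of_surjective (hG : IsCompleteMultipartiteGraph G)
    (hc : IsNLColoring (mycielskian G) c) (hsurj : Function.Surjective (c ∘ Sum.inl)) (b : α) :
    c '' (mycielskian G).neighborSet (Sum.inl b) = (c ∘ Sum.inl) '' G.neighborSet b := by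
  rw [mycielskian_neighborSet_inl, Set.image_union, Set.union_eq_left.mpr, Set.image_image]
  · rfl
  -- a shadow neighbour `u_a` of `v_b` has the colour of a twin of `a`, which is adjacent to `b`
  rintro _ ⟨_, ⟨a, hba, rfl⟩, rfl⟩
  obtain ⟨b', hcol, hN⟩ := hG.exists_neighborSet_eq_of_surjective hc hsurj a
  have hb'b : G.Adj b' b := by
    rw [← mem_neighborSet, ← hN]
    exact hba.symm
  exact ⟨Sum.inl b', ⟨b', hb'b.symm, rfl⟩, hcol.symm⟩

theorem apex_color_notMem_of_surjective (hG : IsCompleteMultipartiteGraph G)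
    (hc : IsNLColoring (mycielskian G) c) (hsurj : Function.Surjective (c ∘ Sum.inl)) (a : α) :
    c (Sum.inr (Sum.inr ())) ∉ (c ∘ Sum.inl) '' G.neighborSet a := by
  intro hmem
  obtain ⟨b, hcol, hN⟩ := hG.exists_neighborSet_eq_of_surjective hc hsurj a
  refine hc.2 (Sum.inr (Sum.inl a)) (Sum.inl b) Sum.inr_ne_inl hcol ?_
  rw [hG.image_neighborSet_inl_of_surjective hc hsurj, mycielskian_neighborSet_inr_inl,
    Set.image_insert_eq, Set.image_image, ← hN]
  exact Set.insert_eq_of_mem hmem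

theorem not_surjective_comp_inl (hG : IsCompleteMultipartiteGraph G)
    (hc : IsNLColoring (mycielskian G) c) : ¬ Function.Surjective (c ∘ Sum.inl) := by
  intro hsurj
  obtain ⟨a, ha⟩ := hsurj (c (Sum.inr (Sum.inr ())))
  obtain ⟨b, hab⟩ := hG.exists_adj a
  exact hG.apex_color_notMem_of_surjective hc hsurj b ⟨a, hab.symm, ha⟩

theorem card_lt_of_isNLColoring_mycielskian [Fintype α] (hG : IsCompleteMultipartiteGraph G)
    (hc : IsNLColoring (mycielskian G) c) : Fintype.card α < k := by
  have hinj := hG.injective_comp_inl hc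
  have hle : Fintype.card α ≤ k := by simpa using Fintype.card_le_of_injective _ hinj
  refine hle.lt_of_ne fun hk => hG.not_surjective_comp_inl hc ?_
  exact ((Fintype.bijective_iff_injective_and_card _).mpr ⟨hinj, by simp [hk]⟩).2

end IsCompleteMultipartiteGraph

/-- If `G` is a complete multipartite graph, then `χ_NL(μ(G)) = χ_NL(G) + 1`. -/
theorem nlChromaticNumber_mycielskian_of_completeMultipartite
    {α : Type*} [Fintype α] (G : SimpleGraph α)
    (hG : IsCompleteMultipartiteGraph G) :
    nlChromaticNumber (mycielskian G) = nlChromaticNumber G + 1 := by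
  refine le_antisymm (nlChromaticNumber_mycielskian_le G) ?_
  obtain ⟨c, hc⟩ := exists_isNLColoring_nlChromaticNumber (mycielskian G)
  rw [hG.nlChromaticNumber_eq_card]
  exact hG.card_lt_of_isNLColoring_mycielskian hc
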